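/- Let C be a field of characteristic 0 containing a primitive m-th root of unity (m ≥ 2), let k = C(t) with the derivation δ = d/dt, let λ_1, …, λ_m ∈ C be nonzero and pairwise distinct, let f ∈ k, and let P ∈ M_m(k) be the matrix with diagonal entries λ_1, …, λ_m, entry f in position (1,m), and zeros elsewhere. Then a matrix X ∈ M_m(k) satisfies d_P(X) = 0 if and only if there exist μ_1, …, μ_m ∈ C and x ∈ k with δ(x) + (λ_m − λ_1)·x + f·(μ_1 − μ_m) = 0 such that X is the matrix with diagonal entries μ_1, …, μ_m, entry x in position (1,m), and zeros elsewhere. -/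
import Mathlib

open Polynomial

section
variable {C : Type*} [Field C] [CharZero C]
variable (δ : RatFunc C → RatFunc C)

theorem delta_algebraMap
    (hδa : ∀ x y : RatFunc C, δ (x + y) = δ x + δ y)
    (hδm : ∀ x y : RatFunc C, δ (x * y) = x * δ y + δ x * y)
    (hδC : ∀ c : C, δ (RatFunc.C c) = 0)
    (hδX : δ RatFunc.X = 1)
    (p : C[X]) :
    δ (algebraMap C[X] (RatFunc C) p) = algebraMap _ _ (derivative p) := by
  induction p using Polynomial.induction_on with
  | C a => simpa [RatFunc.algebraMap_C] using hδC a
  | add p q hp hq => simp [map_add, hδa, hp, hq]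
  | monomial n a ih =>
    have h1 : (Polynomial.C a * X ^ (n + 1) : C[X]) = Polynomial.C a * X ^ n * X := by ring
    rw [h1, map_mul, hδm, ih, RatFunc.algebraMap_X, hδX]
    rw [show derivative (Polynomial.C a * X ^ n * X) = derivative (Polynomial.C a * X ^ n) * X + Polynomial.C a * X ^ n by
      rw [derivative_mul, derivative_X]; ring]
    simp only [map_add, map_mul, RatFunc.algebraMap_X]
    ring
end

section
variable {C : Type*} [Field C] [CharZero C]
variable {δ : RatFunc C → RatFunc C}
variable (hδa : ∀ x y : RatFunc C, δ (x + y) = δ x + δ y)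
    (hδm : ∀ x y : RatFunc C, δ (x * y) = x * δ y + δ x * y)
    (hδC : ∀ c : C, δ (RatFunc.C c) = 0)
    (hδX : δ RatFunc.X = 1)

include hδa hδm hδC hδX in
theorem delta_key (y : RatFunc C) (c : C) (hy : δ y + RatFunc.C c * y = 0) :
    (c = 0 ∧ ∃ a : C, y = RatFunc.C a) ∨ (c ≠ 0 ∧ y = 0) := by
  set p := y.num with hp
  set q := y.denom with hqdef
  have hq0 : (algebraMap C[X] (RatFunc C)) q ≠ 0 :=
    RatFunc.algebraMap_ne_zero (RatFunc.denom_ne_zero y)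
  have hyq : y * algebraMap C[X] (RatFunc C) q = algebraMap C[X] (RatFunc C) p := by
    conv_lhs => rw [← RatFunc.num_div_denom y]
    rw [div_mul_cancel₀ _ hq0]
  have h2 := hδm y (algebraMap C[X] (RatFunc C) q)
  rw [hyq, delta_algebraMap δ hδa hδm hδC hδX, delta_algebraMap δ hδa hδm hδC hδX] at h2
  -- h2 : aM (derivative p) = y * aM (derivative q) + δ y * aM q
  have hδy : δ y = -(RatFunc.C c * y) := by linear_combination hy
  rw [hδy] at h2
  have h3 : algebraMap C[X] (RatFunc C) (p * derivative q) =
      algebraMap C[X] (RatFunc C) (derivative p * q + Polynomial.C c * (p * q)) := by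
    rw [map_mul, map_add, map_mul, map_mul, map_mul, RatFunc.algebraMap_C, ← hyq]
    linear_combination -(algebraMap C[X] (RatFunc C) q) * h2
  have h4 : p * derivative q = derivative p * q + Polynomial.C c * (p * q) :=
    RatFunc.algebraMap_injective C h3
  have hcop : IsCoprime p q := RatFunc.isCoprime_num_denom y
  have hdvd : q ∣ derivative q := by
    refine (hcop.symm).dvd_of_dvd_mul_left ?_
    rw [h4]
    exact dvd_add (dvd_mul_left q _) ⟨Polynomial.C c * p, by ring⟩
  have hq' : Polynomial.derivative q = 0 := by
    by_contra h
    have hnd : q.natDegree ≠ 0 := by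
      intro h0
      exact h (by rw [Polynomial.eq_C_of_natDegree_eq_zero h0]; simp)
    exact absurd (Polynomial.natDegree_le_of_dvd hdvd h)
      (not_le.mpr (Polynomial.natDegree_derivative_lt hnd))
  have hq1 : q = 1 := (RatFunc.monic_denom y).natDegree_eq_zero.mp
    (Polynomial.natDegree_eq_zero_of_derivative_eq_zero hq')
  have h5 : Polynomial.derivative p = -(Polynomial.C c * p) := by
    rw [hq', hq1] at h4
    rw [eq_neg_iff_add_eq_zero]
    linear_combination -h4
  by_cases hc : c = 0
  · left
    refine ⟨hc, ?_⟩
    subst hc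
    simp only [map_zero, zero_mul, neg_zero] at h5
    obtain ⟨a, ha⟩ : ∃ a, p = Polynomial.C a := ⟨_, Polynomial.eq_C_of_derivative_eq_zero h5⟩
    refine ⟨a, ?_⟩
    rw [← RatFunc.num_div_denom y, ← hp, ← hqdef, hq1, ha]
    simp [RatFunc.algebraMap_C]
  · right
    refine ⟨hc, ?_⟩
    by_contra hy0
    have hp0 : p ≠ 0 := RatFunc.num_ne_zero hy0
    have hcp0 : Polynomial.C c * p ≠ 0 := mul_ne_zero (by simpa using hc) hp0
    have hnd : p.natDegree ≠ 0 := by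
      intro h0
      rw [Polynomial.eq_C_of_natDegree_eq_zero h0] at h5
      simp only [Polynomial.derivative_C] at h5
      rw [Polynomial.eq_C_of_natDegree_eq_zero h0] at hcp0
      exact hcp0 (by rw [← neg_eq_zero, ← h5])
    have hlt := Polynomial.natDegree_derivative_lt hnd
    rw [h5, Polynomial.natDegree_neg, Polynomial.natDegree_mul (by simpa using hc) hp0,
      Polynomial.natDegree_C, zero_add] at hlt
    exact lt_irrefl _ hlt
end


/-- Over `k = C(t)` with the derivation `d/dt`, the constants of
`(M_m(k), d_P)` for the matrix `P` with distinct nonzero diagonal entries `λ₁,…,λ_m ∈ C` and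
`f` in position `(1,m)` are exactly the matrices with constant diagonal entries `μ₁,…,μ_m ∈ C`,
entry `x` in position `(1,m)` satisfying `δ(x) + (λ_m − λ₁)x + f(μ₁ − μ_m) = 0`, and zeros
elsewhere. -/
theorem matrix_dP_constants
    {C : Type*} [Field C] [CharZero C] {m : ℕ} (hm : 2 ≤ m)
    {ω : C} (hω : IsPrimitiveRoot ω m)
    (δ : RatFunc C → RatFunc C)
    (hδa : ∀ x y : RatFunc C, δ (x + y) = δ x + δ y)
    (hδm : ∀ x y : RatFunc C, δ (x * y) = x * δ y + δ x * y)
    (hδC : ∀ c : C, δ (RatFunc.C c) = 0)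
    (hδX : δ RatFunc.X = 1)
    (lam : Fin m → C) (hlam : ∀ i, lam i ≠ 0) (hinj : Function.Injective lam)
    (f : RatFunc C)
    (P : Matrix (Fin m) (Fin m) (RatFunc C))
    (hP : ∀ i j : Fin m, P i j =
      (if i = j then RatFunc.C (lam i) else 0) +
      (if i = (⟨0, by omega⟩ : Fin m) ∧ j = (⟨m - 1, by omega⟩ : Fin m) then f else 0)) :
    ∀ X : Matrix (Fin m) (Fin m) (RatFunc C),
      X.map δ + X * P - P * X = 0 ↔
      ∃ (μ : Fin m → C) (x : RatFunc C),
        δ x + (RatFunc.C (lam ⟨m - 1, by omega⟩) - RatFunc.C (lam ⟨0, by omega⟩)) * x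
            + f * RatFunc.C (μ ⟨0, by omega⟩ - μ ⟨m - 1, by omega⟩) = 0 ∧
        ∀ i j : Fin m, X i j =
          (if i = j then RatFunc.C (μ i) else 0) +
          (if i = (⟨0, by omega⟩ : Fin m) ∧ j = (⟨m - 1, by omega⟩ : Fin m) then x else 0) := by
  set e0 : Fin m := ⟨0, by omega⟩ with he0
  set em : Fin m := ⟨m - 1, by omega⟩ with hem
  have h0m : e0 ≠ em := by
    simp only [he0, hem, ne_eq, Fin.mk.injEq]
    omega
  have hδ0 : δ 0 = 0 := by
    have := hδa 0 0
    simp only [add_zero] at this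
    linear_combination -this
  -- consequences of delta_key
  have hconst : ∀ y : RatFunc C, δ y = 0 → ∃ a, y = RatFunc.C a := by
    intro y h
    rcases delta_key hδa hδm hδC hδX y 0 (by simpa using h) with ⟨_, ha⟩ | ⟨h0, _⟩
    · exact ha
    · exact absurd rfl h0
  have hkill : ∀ (y : RatFunc C) (c : C), c ≠ 0 → δ y + RatFunc.C c * y = 0 → y = 0 := by
    intro y c hc h
    rcases delta_key hδa hδm hδC hδX y c h with ⟨h0, _⟩ | ⟨_, h0⟩
    · exact absurd h0 hc
    · exact h0
  -- product formulas
  have hXP : ∀ (X : Matrix (Fin m) (Fin m) (RatFunc C)) (i j : Fin m),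
      (X * P) i j = X i j * RatFunc.C (lam j) + (if j = em then X i e0 * f else 0) := by
    intro X i j
    rw [Matrix.mul_apply]
    have key : ∀ k, X i k * P k j =
        (if k = j then X i k * RatFunc.C (lam k) else 0) +
        (if k = e0 ∧ j = em then X i k * f else 0) := by
      intro k
      rw [hP]
      split_ifs with h1 h2 h2 <;> subst_eqs <;> ring_nf <;> simp_all
    simp only [key, Finset.sum_add_distrib, Finset.sum_ite_eq', Finset.mem_univ, if_true]
    by_cases hj : j = em <;> simp [hj]
  have hPX : ∀ (X : Matrix (Fin m) (Fin m) (RatFunc C)) (i j : Fin m),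
      (P * X) i j = RatFunc.C (lam i) * X i j + (if i = e0 then f * X em j else 0) := by
    intro X i j
    rw [Matrix.mul_apply]
    have key : ∀ k, P i k * X k j =
        (if i = k then RatFunc.C (lam i) * X k j else 0) +
        (if i = e0 ∧ k = em then f * X k j else 0) := by
      intro k
      rw [hP]
      split_ifs with h1 h2 h2 <;> subst_eqs <;> ring_nf <;> simp_all
    simp only [key, Finset.sum_add_distrib, Finset.sum_ite_eq, Finset.mem_univ, if_true]
    by_cases hi : i = e0 <;> simp [hi]
  intro X
  constructor
  · intro hX
    have EQ : ∀ i j : Fin m, δ (X i j) + (X i j * RatFunc.C (lam j)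
        + (if j = em then X i e0 * f else 0))
        - (RatFunc.C (lam i) * X i j + (if i = e0 then f * X em j else 0)) = 0 := by
      intro i j
      have h := congrFun (congrFun hX i) j
      simp only [Matrix.add_apply, Matrix.sub_apply, Matrix.map_apply, Matrix.zero_apply] at h
      rw [hXP X i j, hPX X i j] at h
      exact h
    have hne : ∀ i j : Fin m, i ≠ j → lam j - lam i ≠ 0 := by
      intro i j hij
      exact sub_ne_zero.mpr fun h => hij (hinj h).symm
    have hz1 : ∀ i j : Fin m, i ≠ j → i ≠ e0 → j ≠ em → X i j = 0 := by
      intro i j hij hie hje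
      apply hkill _ (lam j - lam i) (hne i j hij)
      have h := EQ i j
      rw [if_neg hje, if_neg hie] at h
      rw [map_sub]
      linear_combination h
    have hz2 : ∀ j, j ≠ em → X em j = 0 := by
      intro j hj
      exact hz1 em j (fun h => hj h.symm) (fun h => h0m h.symm) hj
    have hz3 : ∀ i, i ≠ e0 → X i e0 = 0 := by
      intro i hi
      exact hz1 i e0 hi hi h0m
    have hz4 : ∀ j, j ≠ e0 → j ≠ em → X e0 j = 0 := by
      intro j hj0 hjm
      apply hkill _ (lam j - lam e0) (hne e0 j (fun h => hj0 h.symm))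
      have h := EQ e0 j
      rw [if_neg hjm, if_pos rfl, hz2 j hjm] at h
      rw [map_sub]
      linear_combination h
    have hz5 : ∀ i, i ≠ e0 → i ≠ em → X i em = 0 := by
      intro i hi0 him
      apply hkill _ (lam em - lam i) (hne i em him)
      have h := EQ i em
      rw [if_pos rfl, if_neg hi0, hz3 i hi0] at h
      rw [map_sub]
      linear_combination h
    have hoff : ∀ i j : Fin m, i ≠ j → ¬(i = e0 ∧ j = em) → X i j = 0 := by
      intro i j hij hcond
      by_cases hie : i = e0
      · subst hie
        by_cases hje : j = em
        · exact absurd ⟨rfl, hje⟩ hcond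
        · exact hz4 j (fun h => hij h.symm) hje
      · by_cases hje : j = em
        · subst hje
          exact hz5 i hie hij
        · exact hz1 i j hij hie hje
    have hdiag : ∀ i, δ (X i i) = 0 := by
      intro i
      have h := EQ i i
      by_cases hie : i = e0
      · subst hie
        rw [if_neg h0m, if_pos rfl, hz2 e0 h0m] at h
        linear_combination h
      · by_cases him : i = em
        · subst him
          rw [if_pos rfl, if_neg hie, hz3 em hie] at h
          linear_combination h
        · rw [if_neg him, if_neg hie] at h
          linear_combination h
    choose μ hμ using fun i => hconst (X i i) (hdiag i)
    refine ⟨μ, X e0 em, ?_, ?_⟩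
    · have h := EQ e0 em
      rw [if_pos rfl, if_pos rfl, hμ e0, hμ em] at h
      simp only [map_sub]
      linear_combination h
    · intro i j
      by_cases hij : i = j
      · subst hij
        rw [if_pos rfl, if_neg (fun h : i = e0 ∧ i = em => h0m (h.1 ▸ h.2))]
        · rw [add_zero]
          exact hμ i
      · rw [if_neg hij]
        by_cases hcond : i = e0 ∧ j = em
        · obtain ⟨rfl, rfl⟩ := hcond
          rw [if_pos ⟨rfl, rfl⟩, zero_add]
        · rw [if_neg hcond, add_zero]
          exact hoff i j hij hcond
  · rintro ⟨μ, x, hx, hXf⟩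
    have hee : X e0 e0 = RatFunc.C (μ e0) := by
      rw [hXf, if_pos rfl, if_neg (fun h : e0 = e0 ∧ e0 = em => h0m h.2), add_zero]
    have hmm : X em em = RatFunc.C (μ em) := by
      rw [hXf, if_pos rfl, if_neg (fun h : em = e0 ∧ em = em => h0m h.1.symm), add_zero]
    have h0em : X e0 em = x := by
      rw [hXf, if_neg h0m, if_pos ⟨rfl, rfl⟩, zero_add]
    have hcol : ∀ i, i ≠ e0 → X i e0 = 0 := by
      intro i hi
      rw [hXf, if_neg (fun h : i = e0 => hi h), if_neg (fun h : i = e0 ∧ e0 = em => hi h.1), add_zero]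
    have hrow : ∀ j, j ≠ em → X em j = 0 := by
      intro j hj
      rw [hXf, if_neg (fun h : em = j => hj h.symm), if_neg (fun h : em = e0 ∧ j = em => hj h.2), add_zero]
    have hoff : ∀ i j : Fin m, i ≠ j → ¬(i = e0 ∧ j = em) → X i j = 0 := by
      intro i j hij hcond
      rw [hXf, if_neg hij, if_neg hcond, add_zero]
    funext i j
    simp only [Matrix.add_apply, Matrix.sub_apply, Matrix.map_apply, Matrix.zero_apply]
    rw [hXP X i j, hPX X i j]
    by_cases hij : i = j
    · subst hij
      have hXd : X i i = RatFunc.C (μ i) := by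
        rw [hXf, if_pos rfl, if_neg (fun h : i = e0 ∧ i = em => h0m (h.1 ▸ h.2)), add_zero]
      by_cases hie : i = e0
      · subst hie
        rw [if_neg h0m, if_pos rfl, hrow e0 h0m, hXd, hδC]
        ring
      · by_cases him : i = em
        · subst him
          rw [if_pos rfl, if_neg hie, hcol em hie, hXd, hδC]
          ring
        · rw [if_neg him, if_neg hie, hXd, hδC]
          ring
    · by_cases hcond : i = e0 ∧ j = em
      · obtain ⟨rfl, rfl⟩ := hcond
        rw [if_pos rfl, if_pos rfl, h0em, hee, hmm]
        simp only [map_sub] at hx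
        linear_combination hx
      · have hz : X i j = 0 := hoff i j hij hcond
        rw [hz, hδ0]
        by_cases hje : j = em
        · subst hje
          have hie : i ≠ e0 := fun h => hcond ⟨h, rfl⟩
          rw [if_pos rfl, if_neg hie, hcol i hie]
          ring
        · by_cases hie : i = e0
          · subst hie
            have hjm : j ≠ em := hje
            rw [if_neg hjm, if_pos rfl, hrow j hjm]
            ring
          · rw [if_neg hje, if_neg hie]
            ring
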